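/- arXiv:2605.13780 — 3 statements merged into one kernel-verified Lean document; each statement's English description precedes it below -/
import Mathlib

section
/- Let G be a CFG over Σ, F = (G′, (β₁,G_{β₁}),…,(β_n,G_{β_n})) an atomic fusion of G, and μ̂_F the lift of the fusion morphism to interleavings. Then μ̂_F(L(G′)) ⊆ L(G), i.e., every interleaving of the fused program corresponds to interleavings of the original program. -/
/-!
Common definitions: control flow graphs, traces, interleavings of parameterized
programs, the covering preorder, Mazurkiewicz reductions, atomic fusions,
sync-point instrumentations, locks and general synchronization alphabets.
-/

/-- `PathRel E ℓ w ℓ'` : the word `w` labels a path from `ℓ` to `ℓ'` in the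
labeled graph with edge relation `E`. -/
inductive PathRel {L α : Type} (E : L → α → L → Prop) : L → List α → L → Prop
  | nil (ℓ : L) : PathRel E ℓ [] ℓ
  | cons {ℓ ℓ' ℓ'' : L} {a : α} {w : List α} :
      E ℓ a ℓ' → PathRel E ℓ' w ℓ'' → PathRel E ℓ (a :: w) ℓ''

/-- A control flow graph over the alphabet `α`. -/
structure CFG (α : Type) where
  Loc : Type
  loc_finite : Finite Loc
  Edge : Loc → α → Loc → Prop
  init : Loc
  exit : Loc
  init_ne_exit : init ≠ exit

namespace CFG

variable {α : Type}

/-- The set of words labeling paths from the initial to the exit location. -/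
def traces (G : CFG α) : Set (List α) := { w | PathRel G.Edge G.init w G.exit }

/-- The set of actions occurring in `G`. -/
def alphabet (G : CFG α) : Set α := { a | ∃ ℓ ℓ', G.Edge ℓ a ℓ' }

/-- Action `a` labels at most one edge of `G`. -/
def UniqueAct (G : CFG α) (a : α) : Prop :=
  ∀ ⦃ℓ₁ ℓ₁' ℓ₂ ℓ₂' : G.Loc⦄, G.Edge ℓ₁ a ℓ₁' → G.Edge ℓ₂ a ℓ₂' → ℓ₁ = ℓ₂ ∧ ℓ₁' = ℓ₂'

/-- The transition relation is finite. -/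
def EdgeFinite (G : CFG α) : Prop :=
  { p : G.Loc × α × G.Loc | G.Edge p.1 p.2.1 p.2.2 }.Finite

/-- Every location is reachable from the initial location, and the exit
location is reachable from every location. -/
def Reachable (G : CFG α) : Prop :=
  ∀ ℓ : G.Loc, (∃ w, PathRel G.Edge G.init w ℓ) ∧ (∃ w, PathRel G.Edge ℓ w G.exit)

/-- Well-formedness of a CFG over a plain alphabet (finitely many transitions,
reachability conditions, and every action labels at most one edge). -/
def WF (G : CFG α) : Prop := G.EdgeFinite ∧ G.Reachable ∧ ∀ a : α, G.UniqueAct a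

end CFG

/-! ### Interleavings -/

/-- `τ↑i` : the projection of an interleaving to the actions of thread `i`. -/
def projThread {α : Type} (i : ℕ) (τ : List (α × ℕ)) : List α :=
  (τ.filter (fun x => x.2 == i)).map Prod.fst

/-- The interleavings of the parameterized program with thread template `G`
and no synchronization. -/
def progLang {α : Type} (G : CFG α) : Set (List (α × ℕ)) :=
  { τ | ∀ i : ℕ, projThread i τ ∈ G.traces ∨ projThread i τ = [] }

/-- One swap of two adjacent commuting indexed actions of different threads. -/
def SwapStep {α : Type} (I : Set (α × α)) (τ τ' : List (α × ℕ)) : Prop :=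
  ∃ (ρ σ : List (α × ℕ)) (a b : α) (i j : ℕ),
    (a, b) ∈ I ∧ i ≠ j ∧
      τ = ρ ++ (a, i) :: (b, j) :: σ ∧ τ' = ρ ++ (b, j) :: (a, i) :: σ

/-- The covering preorder `⊑_I`: the smallest reflexive-transitive relation
allowing swaps of adjacent `I`-commuting actions of different threads. -/
def CoveredBy {α : Type} (I : Set (α × α)) : List (α × ℕ) → List (α × ℕ) → Prop :=
  Relation.ReflTransGen (SwapStep I)

/-- `L₁` is a Mazurkiewicz reduction (up to `I`) of `L₂`. -/
def MazReduction {α : Type} (I : Set (α × α)) (L₁ L₂ : Set (List (α × ℕ))) : Prop :=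
  L₁ ⊆ L₂ ∧ ∀ τ ∈ L₂, ∃ τ' ∈ L₁, CoveredBy I τ τ'

/-! ### Morphisms -/

/-- Image of a word under a morphism `μ : α → 𝒫(β^*)`. -/
def morphWord {α β : Type} (μ : α → Set (List β)) : List α → Set (List β)
  | [] => {[]}
  | x :: w => { s | ∃ u ∈ μ x, ∃ v ∈ morphWord μ w, s = u ++ v }

/-- Image of a language under a morphism. -/
def morphLang {α β : Type} (μ : α → Set (List β)) (L : Set (List α)) : Set (List β) :=
  ⋃ w ∈ L, morphWord μ w

/-! ### Atomic fusions -/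

/-- Locations of the graph obtained from `G'` by substituting `Gβ k` for the
edge labeled `β k`: locations of `G'` together with the interior locations of
each `Gβ k`. -/
def fuseLoc {α : Type} (G' : CFG α) {n : ℕ} (Gβ : Fin n → CFG α) : Type :=
  G'.Loc ⊕ Σ k : Fin n, { ℓ : (Gβ k).Loc // ℓ ≠ (Gβ k).init ∧ ℓ ≠ (Gβ k).exit }

open Classical in
/-- Embedding of the locations of `Gβ k` into the substituted graph, identifying
the initial and exit locations of `Gβ k` with the endpoints of the `β k` edge. -/
noncomputable def fuseEmb {α : Type} (G' : CFG α) {n : ℕ} (Gβ : Fin n → CFG α)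
    (src tgt : Fin n → G'.Loc) (k : Fin n) (ℓ : (Gβ k).Loc) : fuseLoc G' Gβ :=
  if h1 : ℓ = (Gβ k).init then Sum.inl (src k)
  else if h2 : ℓ = (Gβ k).exit then Sum.inl (tgt k)
  else Sum.inr ⟨k, ℓ, h1, h2⟩

/-- Edges of the graph obtained from `G'` by substituting each `Gβ k` for the
edge labeled `β k` (with endpoints `src k`, `tgt k`). -/
def fuseEdge {α : Type} (G' : CFG α) {n : ℕ} (β : Fin n → α) (Gβ : Fin n → CFG α)
    (src tgt : Fin n → G'.Loc) (x : fuseLoc G' Gβ) (a : α) (y : fuseLoc G' Gβ) : Prop :=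
  (∃ ℓ ℓ', G'.Edge ℓ a ℓ' ∧ (∀ k, a ≠ β k) ∧ x = Sum.inl ℓ ∧ y = Sum.inl ℓ') ∨
  (∃ k ℓ ℓ', (Gβ k).Edge ℓ a ℓ' ∧
      x = fuseEmb G' Gβ src tgt k ℓ ∧ y = fuseEmb G' Gβ src tgt k ℓ')

/-- An atomic fusion `F = (G', (β 0, Gβ 0), …, (β (n-1), Gβ (n-1)))` of the CFG `G`:
`G` is (up to isomorphism) obtained from `G'` by replacing, for each `k`, the unique
edge labeled `β k` by the graph `Gβ k`. -/
structure AtomicFusion {α : Type} (G : CFG α) (n : ℕ) where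
  G' : CFG α
  β : Fin n → α
  Gβ : Fin n → CFG α
  β_inj : Function.Injective β
  src : Fin n → G'.Loc
  tgt : Fin n → G'.Loc
  β_edge : ∀ k, G'.Edge (src k) (β k) (tgt k)
  Gβ_alph : ∀ k a, a ∈ (Gβ k).alphabet → ∀ k', a ≠ β k'
  Gβ_nonempty : ∀ k, ((Gβ k).traces).Nonempty
  iso : G.Loc ≃ fuseLoc G' Gβ
  iso_init : iso G.init = Sum.inl G'.init
  iso_exit : iso G.exit = Sum.inl G'.exit
  iso_edge : ∀ ℓ a ℓ', G.Edge ℓ a ℓ' ↔ fuseEdge G' β Gβ src tgt (iso ℓ) a (iso ℓ')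

namespace AtomicFusion

variable {α : Type} {G : CFG α} {n : ℕ}

/-- The fusion morphism `μ_F`: maps each block symbol `β k` to `traces (Gβ k)`
and any other action `a` to `{[a]}`. -/
def morph (F : AtomicFusion G n) (a : α) : Set (List α) :=
  { w | (∃ k, a = F.β k ∧ w ∈ (F.Gβ k).traces) ∨ ((∀ k, a ≠ F.β k) ∧ w = [a]) }

/-- The lift `μ̂_F` of the fusion morphism to indexed actions. -/
def morphIdx (F : AtomicFusion G n) (x : α × ℕ) : Set (List (α × ℕ)) :=
  { w | ∃ u ∈ F.morph x.1, w = u.map (fun a => (a, x.2)) }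

/-- Soundness of an atomic fusion wrt. the commutativity relation `I`:
`μ̂_F(L(G'))` is a Mazurkiewicz reduction (up to `I`) of `L(G)`. -/
def Sound (F : AtomicFusion G n) (I : Set (α × α)) : Prop :=
  MazReduction I (morphLang F.morphIdx (progLang F.G')) (progLang G)

end AtomicFusion

/-! ### Movers -/

/-- `a` is a left-mover if `(b, a) ∈ I` for all `b ∈ Σ(G)`. -/
def LeftMover {α : Type} (G : CFG α) (I : Set (α × α)) (a : α) : Prop :=
  ∀ b ∈ G.alphabet, (b, a) ∈ I

/-- `a` is a right-mover if `(a, b) ∈ I` for all `b ∈ Σ(G)`. -/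
def RightMover {α : Type} (G : CFG α) (I : Set (α × α)) (a : α) : Prop :=
  ∀ b ∈ G.alphabet, (a, b) ∈ I

/-! ### Sync-points -/

/-- The word `⟨•:t₁⟩ … ⟨•:t_n⟩` where `T = {t₁ < … < t_n}`; the sync-point
symbol `•` is represented by `none`. -/
def bulletWord {α : Type} (T : Finset ℕ) : List (Option α × ℕ) :=
  (T.sort (· ≤ ·)).map (fun t => ((none : Option α), t))

/-- A concatenation of words, each of which either consists of program actions
of threads in `T` only, or equals `⟨•:T⟩`. -/
inductive PhaseWord {α : Type} (T : Finset ℕ) : List (Option α × ℕ) → Prop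
  | nil : PhaseWord T []
  | act {w τ : List (Option α × ℕ)} :
      (∀ x ∈ w, (∃ a : α, x.1 = some a) ∧ x.2 ∈ T) → PhaseWord T τ → PhaseWord T (w ++ τ)
  | bullet {τ : List (Option α × ℕ)} : PhaseWord T τ → PhaseWord T (bulletWord T ++ τ)

/-- `sync_{•,T}`: while the threads in `T` are running they pass sync-points
together; at some point a subset `T' ⊊ T` of threads remains. -/
inductive SyncT {α : Type} : Finset ℕ → List (Option α × ℕ) → Prop
  | base : SyncT ∅ []
  | step {T T' : Finset ℕ} {τ₁ τ₂ : List (Option α × ℕ)} :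
      T' ⊂ T → PhaseWord T τ₁ → SyncT T' τ₂ → SyncT T (τ₁ ++ τ₂)

/-- `sync_•(τ̂)` : there is a finite set `T ⊆ ℕ` with `sync_{•,T}(τ̂)`. -/
def SyncBullet {α : Type} (τ : List (Option α × ℕ)) : Prop := ∃ T : Finset ℕ, SyncT T τ

/-- Restriction of an indexed word over `Σ ∪ {•}` to its `Σ`-indexed letters. -/
def restrictSigma {α : Type} (τ : List (Option α × ℕ)) : List (α × ℕ) :=
  τ.filterMap (fun x => x.1.map (fun a => (a, x.2)))

/-- `G'` is a sync-point instrumentation of `G`: erasing `•` from the traces of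
`G'` yields exactly the traces of `G`, injectively. -/
structure SyncInstr {α : Type} (G : CFG α) (G' : CFG (Option α)) : Prop where
  proj_traces : G.traces = (fun τ => τ.filterMap id) '' G'.traces
  proj_inj : ∀ τ₁ ∈ G'.traces, ∀ τ₂ ∈ G'.traces, τ₁.filterMap id = τ₂.filterMap id → τ₁ = τ₂

/-- Well-formedness of a CFG over `Σ ∪ {•}` (every action of `Σ` labels at most
one edge; `•` may label several edges). -/
def CFG.WFsync {α : Type} (G' : CFG (Option α)) : Prop :=
  G'.EdgeFinite ∧ G'.Reachable ∧ ∀ a : α, G'.UniqueAct (some a)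

/-- The language `L(G, G')` of the sync-point instrumented program. -/
def instrLang {α : Type} (G' : CFG (Option α)) : Set (List (α × ℕ)) :=
  { τ | ∃ τ' : List (Option α × ℕ), τ = restrictSigma τ' ∧ SyncBullet τ' ∧
      ∀ i : ℕ, projThread i τ' ∈ G'.traces ∨ projThread i τ' = [] }

/-- `|w|_•` : the number of occurrences of the sync-point symbol in `w`. -/
def bulletCount {α : Type} (w : List (Option α)) : ℕ := (w.filter (fun x => x.isNone)).length

/-- The phase order `⤳`: `a` can occur in a strictly later phase than `b` in
some execution of the instrumented program. -/
def PhaseOrder {α : Type} (G' : CFG (Option α)) (a b : α) : Prop :=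
  ∃ τ' : List (Option α × ℕ), SyncBullet τ' ∧ restrictSigma τ' ∈ instrLang G' ∧
    ∃ i j : ℕ, i ≠ j ∧
      ∃ τ₁ σ₁, projThread i τ' = τ₁ ++ some a :: σ₁ ∧
      ∃ τ₂ σ₂, projThread j τ' = τ₂ ++ some b :: σ₂ ∧ bulletCount τ₁ < bulletCount τ₂

/-! ### General synchronization alphabets -/

/-- A synchronization alphabet: a set `σs` of synchronization actions together
with a predicate `Φ` on indexed words over `Σ ∪ S`, preserved by all
permutations of thread indices. -/
structure SyncAlphabet (α σs : Type) where
  Φ : List ((α ⊕ σs) × ℕ) → Prop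
  perm_inv : ∀ (π : Equiv.Perm ℕ) (τ : List ((α ⊕ σs) × ℕ)),
      Φ τ → Φ (τ.map (fun x => (x.1, π x.2)))

/-- Restriction of an indexed word over `Σ ∪ S` to its `Σ`-indexed letters. -/
def restrictActions {α σs : Type} (τ' : List ((α ⊕ σs) × ℕ)) : List (α × ℕ) :=
  τ'.filterMap (fun x => (x.1.getLeft?).map (fun a => (a, x.2)))

/-- The language of the parameterized program `P = ((S, Φ), G)`. -/
def syncLang {α σs : Type} (SA : SyncAlphabet α σs) (G : CFG (α ⊕ σs)) :
    Set (List (α × ℕ)) :=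
  { τ | ∃ τ', τ = restrictActions τ' ∧ SA.Φ τ' ∧
      ∀ i : ℕ, projThread i τ' ∈ G.traces ∨ projThread i τ' = [] }

/-- The configuration `C` is coverable in `P = ((S, Φ), G)`. -/
def Coverable {α σs : Type} (SA : SyncAlphabet α σs) (G : CFG (α ⊕ σs))
    {r : ℕ} (C : Fin r → G.Loc) : Prop :=
  ∃ (τ' : List ((α ⊕ σs) × ℕ)) (t : Fin r → ℕ), SA.Φ τ' ∧ Function.Injective t ∧
    ∀ k, PathRel G.Edge G.init (projThread (t k) τ') (C k)

/-- Well-formedness of a CFG over `Σ ∪ S` (only actions of `Σ` are required to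
label at most one edge). -/
def CFG.WFsum {α σs : Type} (G : CFG (α ⊕ σs)) : Prop :=
  G.EdgeFinite ∧ G.Reachable ∧ ∀ a : α, G.UniqueAct (Sum.inl a)

/-! ### Locks -/

/-- The valid projections of a lock-respecting execution to a single lock `m`:
a sequence of blocks `⟨acq(m) rel(m) : i⟩`, optionally followed by a single
`⟨acq(m) : i⟩`.  `true` stands for `acq(m)`, `false` for `rel(m)`. -/
inductive LockSeq : List (Bool × ℕ) → Prop
  | nil : LockSeq []
  | final (i : ℕ) : LockSeq [(true, i)]
  | block (i : ℕ) {w : List (Bool × ℕ)} : LockSeq w → LockSeq ((true, i) :: (false, i) :: w)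

/-- Projection of an indexed word over `Σ ∪ S_lk` to the indexed occurrences of
`acq(m)`/`rel(m)` for the lock `m`. -/
def lockProj {α M : Type} [DecidableEq M] (m : M) (τ' : List ((α ⊕ (M × Bool)) × ℕ)) :
    List (Bool × ℕ) :=
  τ'.filterMap (fun x => match x.1 with
    | Sum.inl _ => none
    | Sum.inr p => if p.1 = m then some (p.2, x.2) else none)

/-- The lock synchronization predicate `sync_lk`. -/
def SyncLk {α M : Type} [DecidableEq M] (τ' : List ((α ⊕ (M × Bool)) × ℕ)) : Prop :=
  ∀ m : M, LockSeq (lockProj m τ')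

/-- The language of a program `P = ((S_lk, sync_lk), G)` with locks. -/
def lockLang {α M : Type} [DecidableEq M] (G : CFG (α ⊕ (M × Bool))) :
    Set (List (α × ℕ)) :=
  { τ | ∃ τ', τ = restrictActions τ' ∧ SyncLk τ' ∧
      ∀ i : ℕ, projThread i τ' ∈ G.traces ∨ projThread i τ' = [] }

/-- Coverability of a configuration in a program with locks. -/
def CoverableLk {α M : Type} [DecidableEq M] (G : CFG (α ⊕ (M × Bool)))
    {r : ℕ} (C : Fin r → G.Loc) : Prop :=
  ∃ (τ' : List ((α ⊕ (M × Bool)) × ℕ)) (t : Fin r → ℕ), SyncLk τ' ∧ Function.Injective t ∧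
    ∀ k, PathRel G.Edge G.init (projThread (t k) τ') (C k)

/-! ### Locks and sync-points combined -/

/-- Restriction of an indexed word over `Σ ∪ S_lk ∪ {•}` to `(Σ ∪ S_lk)`-indexed
letters. -/
def restrictSyncWord {α M : Type} (τ' : List (Option (α ⊕ (M × Bool)) × ℕ)) :
    List ((α ⊕ (M × Bool)) × ℕ) :=
  τ'.filterMap (fun x => x.1.map (fun e => (e, x.2)))

/-- Restriction of an indexed word over `Σ ∪ S_lk ∪ {•}` to `(Σ ∪ {•})`-indexed
letters. -/
def restrictBulletWord {α M : Type} (τ' : List (Option (α ⊕ (M × Bool)) × ℕ)) :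
    List (Option α × ℕ) :=
  τ'.filterMap (fun x => match x.1 with
    | none => some ((none : Option α), x.2)
    | some (Sum.inl a) => some (some a, x.2)
    | some (Sum.inr _) => none)

/-- Restriction of an indexed word over `Σ ∪ S_lk ∪ {•}` to `Σ`-indexed letters. -/
def restrictActionsO {α M : Type} (τ' : List (Option (α ⊕ (M × Bool)) × ℕ)) :
    List (α × ℕ) :=
  τ'.filterMap (fun x => match x.1 with
    | some (Sum.inl a) => some (a, x.2)
    | _ => none)

/-- The language `L(P̂, G')` of a lock program instrumented with sync-points. -/
def instrLockLang {α M : Type} [DecidableEq M] (G' : CFG (Option (α ⊕ (M × Bool)))) :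
    Set (List (α × ℕ)) :=
  { τ | ∃ τ', τ = restrictActionsO τ' ∧ SyncLk (restrictSyncWord τ') ∧
      SyncBullet (restrictBulletWord τ') ∧
      ∀ i : ℕ, projThread i τ' ∈ G'.traces ∨ projThread i τ' = [] }

/-!
Each thread's projection of an interleaving in `μ̂_F(τ)` lies in `μ_F(τ↑i)`, so it suffices to
show `μ_F(traces G') ⊆ traces G`. Along a path of `G'`, an edge labelled `β k` must be the
unique one from `src k` to `tgt k`, and `G` contains a copy of `Gβ k` between exactly these
locations; every other edge of `G'` survives in `G` unchanged.
-/

theorem PathRel.append {L α : Type} {E : L → α → L → Prop} {ℓ ℓ' ℓ'' : L} {u v : List α}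
    (h₁ : PathRel E ℓ u ℓ') (h₂ : PathRel E ℓ' v ℓ'') : PathRel E ℓ (u ++ v) ℓ'' := by
  induction h₁ with
  | nil => exact h₂
  | cons e _ ih => exact .cons e (ih h₂)

theorem PathRel.map {L L' α : Type} {E : L → α → L → Prop} {E' : L' → α → L' → Prop}
    (f : L → L') (hf : ∀ x a y, E x a y → E' (f x) a (f y)) {ℓ ℓ' : L} {w : List α}
    (h : PathRel E ℓ w ℓ') : PathRel E' (f ℓ) w (f ℓ') := by
  induction h with
  | nil => exact .nil _
  | cons e _ ih => exact .cons (hf _ _ _ e) ih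

section projThread

variable {α : Type}

theorem projThread_append (i : ℕ) (u v : List (α × ℕ)) :
    projThread i (u ++ v) = projThread i u ++ projThread i v := by
  simp [projThread]

theorem projThread_cons (i : ℕ) (x : α × ℕ) (w : List (α × ℕ)) :
    projThread i (x :: w) = if x.2 = i then x.1 :: projThread i w else projThread i w := by
  by_cases h : x.2 = i <;> simp [projThread, h]

theorem projThread_map_pair_self (i : ℕ) (s : List α) :
    projThread i (s.map fun a => (a, i)) = s := by
  simp [projThread, List.filter_map, Function.comp_def]

theorem projThread_map_pair_of_ne {i j : ℕ} (h : j ≠ i) (s : List α) :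
    projThread i (s.map fun a => (a, j)) = [] := by
  simp [projThread, List.filter_map, Function.comp_def, h]

end projThread

namespace AtomicFusion

variable {α : Type} {G : CFG α} {n : ℕ} (F : AtomicFusion G n)

theorem projThread_mem_morphWord {w τ : List (α × ℕ)} (hτ : τ ∈ morphWord F.morphIdx w)
    (i : ℕ) : projThread i τ ∈ morphWord F.morph (projThread i w) := by
  induction w generalizing τ with
  | nil =>
    obtain rfl : τ = [] := hτ
    exact rfl
  | cons x w ih =>
    obtain ⟨_, ⟨s, hs, rfl⟩, v, hv, rfl⟩ := hτ
    obtain ⟨a, j⟩ := x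
    rw [projThread_append, projThread_cons]
    by_cases hj : j = i
    · subst hj
      rw [projThread_map_pair_self, if_pos rfl]
      exact ⟨s, hs, _, ih hv, rfl⟩
    · rw [projThread_map_pair_of_ne hj, if_neg hj, List.nil_append]
      exact ih hv

theorem fuseEmb_init (k : Fin n) :
    fuseEmb F.G' F.Gβ F.src F.tgt k (F.Gβ k).init = .inl (F.src k) :=
  dif_pos rfl

theorem fuseEmb_exit (k : Fin n) :
    fuseEmb F.G' F.Gβ F.src F.tgt k (F.Gβ k).exit = .inl (F.tgt k) :=
  (dif_neg (F.Gβ k).init_ne_exit.symm).trans (dif_pos rfl)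

theorem pathRel_fuseEdge_of_mem_morphWord (hβ : ∀ k, F.G'.UniqueAct (F.β k))
    {ℓ ℓ' : F.G'.Loc} {w : List α} (hw : PathRel F.G'.Edge ℓ w ℓ')
    {s : List α} (hs : s ∈ morphWord F.morph w) :
    PathRel (fuseEdge F.G' F.β F.Gβ F.src F.tgt) (.inl ℓ) s (.inl ℓ') := by
  induction hw generalizing s with
  | nil =>
    obtain rfl : s = [] := hs
    exact .nil _
  | @cons ℓ ℓ₁ _ _ _ e _ ih =>
    obtain ⟨u, hu, v, hv, rfl⟩ := hs
    refine .append ?_ (ih hv)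
    rcases hu with ⟨k, rfl, hu⟩ | ⟨hne, rfl⟩
    · obtain ⟨rfl, rfl⟩ := hβ k e (F.β_edge k)
      rw [← fuseEmb_init, ← fuseEmb_exit]
      exact hu.map _ fun _ _ _ e' => .inr ⟨k, _, _, e', rfl, rfl⟩
    · exact .cons (.inl ⟨ℓ, ℓ₁, e, hne, rfl, rfl⟩) (.nil _)

theorem mem_traces_of_mem_morphWord (hβ : ∀ k, F.G'.UniqueAct (F.β k))
    {w : List α} (hw : w ∈ F.G'.traces) {s : List α} (hs : s ∈ morphWord F.morph w) :
    s ∈ G.traces := by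
  have hpath := (F.pathRel_fuseEdge_of_mem_morphWord hβ hw hs).map F.iso.symm
    (fun _ a _ e => (F.iso_edge _ a _).2 (by simpa using e))
  rwa [← F.iso_init, ← F.iso_exit, Equiv.symm_apply_apply, Equiv.symm_apply_apply] at hpath

end AtomicFusion

theorem stmt_1_general {α : Type} (G : CFG α) {n : ℕ} (F : AtomicFusion G n)
    (hG' : F.G'.WF) :
    morphLang F.morphIdx (progLang F.G') ⊆ progLang G := by
  intro τ hτ i
  obtain ⟨w, hw, hτw⟩ := Set.mem_iUnion₂.1 hτ
  have hproj := F.projThread_mem_morphWord hτw i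
  rcases hw i with htr | hnil
  · exact .inl (F.mem_traces_of_mem_morphWord (fun k => hG'.2.2 _) htr hproj)
  · rw [hnil] at hproj
    exact .inr hproj

/-- Let `F` be an atomic fusion of `G` and `μ̂_F` the lift of the fusion
morphism to interleavings. Then `μ̂_F(L(G')) ⊆ L(G)`. -/
theorem stmt_1 {α : Type} (G : CFG α) {n : ℕ} (F : AtomicFusion G n)
    (hG : G.WF) (hG' : F.G'.WF) (hGβ : ∀ k, (F.Gβ k).WF) :
    morphLang F.morphIdx (progLang F.G') ⊆ progLang G :=
  stmt_1_general G F hG'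
end

section
/- Let H be a CFG over Σ and R ⊆ Σ×Σ an arbitrary relation. Consider the directed graph whose vertices are the edges of H, with an arc from e to e′ iff the target location of e equals the source location of e′, and let ⪯ be the reachability preorder on its strongly connected components (SCCs). Then the following are equivalent: (i) there exist a trace z₁…z_m ∈ traces(H) and indices 1 ≤ i < j ≤ m with (z_i,z_j) ∈ R; (ii) there exist edges e₁, e₂ of H with (label(e₁),label(e₂)) ∈ R, whose SCCs S₁ (containing e₁) and S₂ (containing e₂) satisfy S₁ ⪯ S₂, where, if S₁ = S₂, then S₁ is nontrivial (it contains at least two edges, or its single edge has an arc to itself). -/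
/-- The edges of a CFG `H`, as a type. -/
def EdgeOf {α : Type} (H : CFG α) : Type :=
  { p : H.Loc × α × H.Loc // H.Edge p.1 p.2.1 p.2.2 }

/-- The arc relation on edges: there is an arc from `e` to `e'` iff the target
location of `e` equals the source location of `e'`. -/
def ArcRel {α : Type} (H : CFG α) (e e' : EdgeOf H) : Prop := e.1.2.2 = e'.1.1

private lemma pathRel_append {L β : Type} {E : L → β → L → Prop} :
    ∀ {ℓ ℓ' ℓ'' : L} {u v : List β},
      PathRel E ℓ u ℓ' → PathRel E ℓ' v ℓ'' → PathRel E ℓ (u ++ v) ℓ'' := by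
  intro ℓ ℓ' ℓ'' u v h1 h2
  induction h1 with
  | nil => simpa using h2
  | cons he _ ih => exact PathRel.cons he (ih h2)

private lemma pathC {α : Type} {H : CFG α} :
    ∀ {ℓ ℓ'' : H.Loc} {w : List α}, PathRel H.Edge ℓ w ℓ'' →
      ∀ j : Fin w.length, ∃ e₀ e₂ : EdgeOf H, e₀.1.1 = ℓ ∧ e₂.1.2.1 = w.get j ∧
        Relation.ReflTransGen (ArcRel H) e₀ e₂ := by
  intro ℓ ℓ'' w h
  induction h with
  | nil => intro j; exact absurd j.2 (by simp)
  | @cons l l' l'' a w' he htail ih =>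
    intro j
    rcases j with ⟨jv, hj⟩
    match jv with
    | 0 =>
      exact ⟨⟨(l, a, l'), he⟩, ⟨(l, a, l'), he⟩, rfl, rfl, Relation.ReflTransGen.refl⟩
    | Nat.succ j' =>
      obtain ⟨e₀, e₂, h0, h2, hr⟩ := ih ⟨j', by simpa using hj⟩
      refine ⟨⟨(l, a, l'), he⟩, e₂, rfl, h2, ?_⟩
      exact Relation.ReflTransGen.head (show ArcRel H _ e₀ from h0.symm) hr

/-- Lemma D: positions `i < j` of a path give edges with those labels and
a strict arc-reachability between them. -/
private lemma pathD {α : Type} {H : CFG α} :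
    ∀ {ℓ ℓ'' : H.Loc} {w : List α}, PathRel H.Edge ℓ w ℓ'' →
      ∀ i j : Fin w.length, (i : ℕ) < (j : ℕ) →
        ∃ e₁ e₂ : EdgeOf H, e₁.1.2.1 = w.get i ∧ e₂.1.2.1 = w.get j ∧
          Relation.TransGen (ArcRel H) e₁ e₂ := by
  intro ℓ ℓ'' w h
  induction h with
  | nil => intro i; exact absurd i.2 (by simp)
  | @cons l l' l'' a w' he htail ih =>
    intro i j hij
    rcases i with ⟨iv, hi⟩; rcases j with ⟨jv, hj⟩
    match jv, hj with
    | Nat.succ j', hj =>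
      match iv, hi with
      | 0, hi =>
        obtain ⟨e₀, e₂, h0, h2, hr⟩ := pathC htail ⟨j', by simpa using hj⟩
        refine ⟨⟨(l, a, l'), he⟩, e₂, rfl, by simpa using h2, ?_⟩
        exact Relation.TransGen.head' (show ArcRel H _ e₀ from h0.symm) hr
      | Nat.succ i', hi =>
        obtain ⟨e₁, e₂, h1, h2, hr⟩ :=
          ih ⟨i', by simpa using hi⟩ ⟨j', by simpa using hj⟩ (by simpa using hij)
        exact ⟨e₁, e₂, by simpa using h1, by simpa using h2, hr⟩

/-- Lemma E: a strict arc-path from `e` to `e'` gives a path in the CFG from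
the source of `e` to the target of `e'` whose word starts with the label of `e`
and ends with the label of `e'`. -/
private lemma pathE {α : Type} {H : CFG α} {e e' : EdgeOf H}
    (h : Relation.TransGen (ArcRel H) e e') :
    ∃ w, PathRel H.Edge e.1.1 (e.1.2.1 :: (w ++ [e'.1.2.1])) e'.1.2.2 := by
  induction h with
  | @single b harc =>
    refine ⟨[], PathRel.cons e.2 ?_⟩
    rw [harc]
    exact PathRel.cons b.2 (PathRel.nil _)
  | @tail b c _ harc ih =>
    obtain ⟨w, hw⟩ := ih
    refine ⟨w ++ [b.1.2.1], ?_⟩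
    have h1 : PathRel H.Edge b.1.2.2 [c.1.2.1] c.1.2.2 := by
      rw [harc]; exact PathRel.cons c.2 (PathRel.nil _)
    have h2 := pathRel_append hw h1
    simpa using h2

/-- There is a trace `z₁…z_m ∈ traces(H)` with positions `i < j` and
`(z_i, z_j) ∈ R` iff there are edges `e₁, e₂` with `(label e₁, label e₂) ∈ R` whose SCCs
`S₁, S₂` (in the graph of edges with arcs given by consecution) satisfy `S₁ ⪯ S₂` and, if
`S₁ = S₂`, `S₁` is nontrivial.  Here `S₁ ⪯ S₂` is expressed by reachability `e₁ →* e₂`;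
given this, `S₁ = S₂` is equivalent to `e₂ →* e₁`, and nontriviality of an SCC is
equivalent to the existence of a nonempty cycle `e₁ →⁺ e₁` through its members. -/
theorem stmt_5 {α : Type} (H : CFG α) (hH : H.WF) (R : Set (α × α)) :
    (∃ (w : List α) (i j : Fin w.length),
        w ∈ H.traces ∧ (i : ℕ) < (j : ℕ) ∧ (w.get i, w.get j) ∈ R) ↔
    (∃ e₁ e₂ : EdgeOf H, (e₁.1.2.1, e₂.1.2.1) ∈ R ∧
        Relation.ReflTransGen (ArcRel H) e₁ e₂ ∧
        (Relation.ReflTransGen (ArcRel H) e₂ e₁ → Relation.TransGen (ArcRel H) e₁ e₁)) := by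
  constructor
  · rintro ⟨w, i, j, hw, hij, hR⟩
    obtain ⟨e₁, e₂, h1, h2, hr⟩ := pathD hw i j hij
    refine ⟨e₁, e₂, by rw [h1, h2]; exact hR, hr.to_reflTransGen, fun hback => ?_⟩
    exact hr.trans_left hback
  · rintro ⟨e₁, e₂, hR, hreach, hcond⟩
    have htg : Relation.TransGen (ArcRel H) e₁ e₂ := by
      rcases hreach.cases_head with rfl | ⟨c, hac, hcb⟩
      · exact hcond Relation.ReflTransGen.refl
      · exact Relation.TransGen.head' hac hcb
    obtain ⟨w, hw⟩ := pathE htg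
    obtain ⟨⟨u, hu⟩, -⟩ := hH.2.1 e₁.1.1
    obtain ⟨-, ⟨v, hv⟩⟩ := hH.2.1 e₂.1.2.2
    set a₁ := e₁.1.2.1
    set a₂ := e₂.1.2.1
    refine ⟨u ++ a₁ :: (w ++ a₂ :: v),
      ⟨u.length, by simp only [List.length_append, List.length_cons]; omega⟩,
      ⟨u.length + 1 + w.length, by simp only [List.length_append, List.length_cons]; omega⟩,
      ?_, by show u.length < u.length + 1 + w.length; omega, ?_⟩
    · have h2 : PathRel H.Edge e₁.1.1 ((a₁ :: (w ++ [a₂])) ++ v) H.exit :=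
        pathRel_append hw hv
      have : PathRel H.Edge H.init (u ++ (a₁ :: (w ++ a₂ :: v))) H.exit := by
        apply pathRel_append hu
        simpa using h2
      exact this
    · have g1 : (u ++ a₁ :: (w ++ a₂ :: v)).get
          ⟨u.length, by simp only [List.length_append, List.length_cons]; omega⟩ = a₁ := by
        show (u ++ a₁ :: (w ++ a₂ :: v))[u.length]'_ = a₁
        rw [List.getElem_append_right (le_refl _)]
        simp
      have g2 : (u ++ a₁ :: (w ++ a₂ :: v)).get
          ⟨u.length + 1 + w.length, by
            simp only [List.length_append, List.length_cons]; omega⟩ = a₂ := by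
        show (u ++ a₁ :: (w ++ a₂ :: v))[u.length + 1 + w.length]'_ = a₂
        rw [List.getElem_append_right (by omega)]
        simp only [show u.length + 1 + w.length - u.length = w.length + 1 from by omega]
        rw [List.getElem_cons_succ, List.getElem_append_right (le_refl _)]
        simp
      rw [g1, g2]; exact hR
end

section
/- (Mover properties do not characterize sound atomic fusions.) Let Σ₀ = {a,b₁,b₂,c} ∪ {β}, and let G, G′, G_β, F and I be as follows: G′ has locations {p,q}, initial p, exit q, and edges (p,a,q), (p,β,q), (p,c,q); G_β has locations {u,s,v}, initial u, exit v, and edges (u,b₁,s), (s,b₂,v); G has locations {p,s,q}, initial p, exit q, and edges (p,a,q), (p,b₁,s), (s,b₂,q), (p,c,q); F = (G′,(β,G_β)); I = {a,b₁,b₂,c}² ∖ {(a,b₂),(b₁,c)}. Let I′ = I ∖ {(b₁,b₂)}. Then: (i) every action in {a,b₁,b₂,c} has the same left-mover and right-mover status with respect to I and with respect to I′; (ii) F is unsound with respect to I′ — in particular, the interleaving ⟨b₁:1⟩⟨b₁:2⟩⟨b₂:1⟩⟨b₂:2⟩ ∈ L(G) satisfies τ ⊑_{I′} τ′ for no τ′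 ∈ μ̂_F(L(G′)). -/
/-- The thread template `G` with locations `p = 0`, `s = 1`, `q = 2` (initial `p`,
exit `q`) and edges `(p,a,q)`, `(p,b₁,s)`, `(s,b₂,q)`, `(p,c,q)`. -/
def exG {α : Type} (a b₁ b₂ c : α) : CFG α where
  Loc := Fin 3
  loc_finite := inferInstance
  Edge := fun ℓ x ℓ' =>
    (ℓ = 0 ∧ x = a ∧ ℓ' = 2) ∨ (ℓ = 0 ∧ x = b₁ ∧ ℓ' = 1) ∨
    (ℓ = 1 ∧ x = b₂ ∧ ℓ' = 2) ∨ (ℓ = 0 ∧ x = c ∧ ℓ' = 2)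
  init := 0
  exit := 2
  init_ne_exit := by decide

/-- The fused thread template `G'` with locations `p = 0`, `q = 1` (initial `p`, exit `q`)
and edges `(p,a,q)`, `(p,β,q)`, `(p,c,q)`. -/
def exG' {α : Type} (a c β : α) : CFG α where
  Loc := Fin 2
  loc_finite := inferInstance
  Edge := fun ℓ x ℓ' =>
    (ℓ = 0 ∧ x = a ∧ ℓ' = 1) ∨ (ℓ = 0 ∧ x = β ∧ ℓ' = 1) ∨ (ℓ = 0 ∧ x = c ∧ ℓ' = 1)
  init := 0
  exit := 1
  init_ne_exit := by decide

/-- The atomic block body `G_β` with locations `u = 0`, `s = 1`, `v = 2` (initial `u`,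
exit `v`) and edges `(u,b₁,s)`, `(s,b₂,v)`. -/
def exGβ {α : Type} (b₁ b₂ : α) : CFG α where
  Loc := Fin 3
  loc_finite := inferInstance
  Edge := fun ℓ x ℓ' => (ℓ = 0 ∧ x = b₁ ∧ ℓ' = 1) ∨ (ℓ = 1 ∧ x = b₂ ∧ ℓ' = 2)
  init := 0
  exit := 2
  init_ne_exit := by decide

/-- The fusion morphism `μ_F` of the atomic fusion `F = (G', (β, G_β))`: it maps `β` to
`traces(G_β)` and every other action `x` to `{[x]}`. -/
def exMorph {α : Type} (β b₁ b₂ : α) (x : α) : Set (List α) :=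
  { w | (x = β ∧ w ∈ (exGβ b₁ b₂).traces) ∨ (x ≠ β ∧ w = [x]) }

/-- The lift `μ̂_F` of the fusion morphism to indexed actions. -/
def exMorphIdx {α : Type} (β b₁ b₂ : α) (x : α × ℕ) : Set (List (α × ℕ)) :=
  { w | ∃ u ∈ exMorph β b₁ b₂ x.1, w = u.map (fun y => (y, x.2)) }

/-!
Removing `(b₁, b₂)` from `I` changes no mover status: `b₂` is no left-mover because
`(a, b₂) ∉ I`, and `b₁` is no right-mover because `(b₁, c) ∉ I`. It does, however, freeze the
middle of `⟨b₁:1⟩⟨b₁:2⟩⟨b₂:1⟩⟨b₂:2⟩`: everything `⊑_{I'}`-above it still has the shape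
`⟨b₁:i⟩⟨b₁:j⟩⟨b₂:k⟩⟨b₂:l⟩` with `i ≠ j`. In `μ̂_F(L(G'))`, on the other hand, a leading `b₁` comes
from an atomic block `b₁ b₂` of one thread, so the next letter cannot be `b₁` of another thread.
-/

section Paths

variable {L α : Type} {E : L → α → L → Prop}

theorem PathRel.nil_iff {ℓ ℓ' : L} : PathRel E ℓ [] ℓ' ↔ ℓ = ℓ' := by
  constructor
  · rintro ⟨⟩
    rfl
  · rintro rfl
    exact .nil ℓ

theorem PathRel.cons_iff {ℓ ℓ' : L} {a : α} {w : List α} :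
    PathRel E ℓ (a :: w) ℓ' ↔ ∃ m, E ℓ a m ∧ PathRel E m w ℓ' := by
  constructor
  · rintro ⟨⟩
    exact ⟨_, ‹_›, ‹_›⟩
  · rintro ⟨m, e, h⟩
    exact .cons e h

theorem PathRel.exists_edge_of_mem {ℓ ℓ' : L} {w : List α} (h : PathRel E ℓ w ℓ')
    {x : α} (hx : x ∈ w) : ∃ m m', E m x m' := by
  induction h with
  | nil => simp at hx
  | cons e _ ih =>
    rcases List.mem_cons.mp hx with rfl | hx
    · exact ⟨_, _, e⟩
    · exact ih hx

end Paths

theorem CFG.mem_alphabet_of_mem_traces {α : Type} {G : CFG α} {w : List α}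
    (hw : w ∈ G.traces) {x : α} (hx : x ∈ w) : x ∈ G.alphabet :=
  PathRel.exists_edge_of_mem hw hx

theorem mem_alphabet_of_mem_progLang {α : Type} {G : CFG α} {τ : List (α × ℕ)}
    (hτ : τ ∈ progLang G) {x : α × ℕ} (hx : x ∈ τ) : x.1 ∈ G.alphabet := by
  have hproj : x.1 ∈ projThread x.2 τ :=
    List.mem_map.mpr ⟨x, List.mem_filter.mpr ⟨hx, by simp⟩, rfl⟩
  rcases hτ x.2 with htr | hnil
  · exact G.mem_alphabet_of_mem_traces htr hproj
  · simp [hnil] at hproj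

theorem pair_interleaving_mem_progLang {α : Type} {G : CFG α} {x y : α} (hxy : [x, y] ∈ G.traces)
    {i j : ℕ} (hij : i ≠ j) : [(x, i), (x, j), (y, i), (y, j)] ∈ progLang G := by
  intro n
  by_cases hi : n = i
  · subst hi
    simp [projThread, hij.symm, hxy]
  by_cases hj : n = j
  · subst hj
    simp [projThread, hij, hxy]
  · simp [projThread, Ne.symm hi, Ne.symm hj]

section Movers

variable {α : Type} {G : CFG α} {I : Set (α × α)} {x y z w : α}

theorem leftMover_diff_singleton_iff (hw : w ∈ G.alphabet) (hwz : (w, z) ∉ I) :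
    LeftMover G (I \ {(y, z)}) x ↔ LeftMover G I x := by
  refine ⟨fun h b hb => (h b hb).1, fun h b hb => ⟨h b hb, ?_⟩⟩
  rintro ⟨-, rfl⟩
  exact hwz (h w hw)

theorem rightMover_diff_singleton_iff (hw : w ∈ G.alphabet) (hyw : (y, w) ∉ I) :
    RightMover G (I \ {(y, z)}) x ↔ RightMover G I x := by
  refine ⟨fun h b hb => (h b hb).1, fun h b hb => ⟨h b hb, ?_⟩⟩
  rintro ⟨rfl, -⟩
  exact hyw (h w hw)

end Movers

section Covering

variable {α : Type} {I : Set (α × α)} {x y : α}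

theorem swapStep_of_pairs (hxy : (x, y) ∉ I) {i j k l : ℕ} (hij : i ≠ j)
    {σ : List (α × ℕ)} (h : SwapStep I [(x, i), (x, j), (y, k), (y, l)] σ) :
    ∃ i' j' k' l', i' ≠ j' ∧ σ = [(x, i'), (x, j'), (y, k'), (y, l')] := by
  obtain ⟨ρ, s, p, q, m, n, hpq, -, heq, rfl⟩ := h
  rcases ρ with _ | ⟨r₁, _ | ⟨r₂, _ | ⟨r₃, ρ⟩⟩⟩
  · simp only [List.nil_append, List.cons.injEq, Prod.mk.injEq] at heq
    obtain ⟨⟨rfl, rfl⟩, ⟨rfl, rfl⟩, rfl⟩ := heq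
    exact ⟨j, i, k, l, hij.symm, rfl⟩
  · simp only [List.cons_append, List.nil_append, List.cons.injEq, Prod.mk.injEq] at heq
    obtain ⟨-, ⟨rfl, rfl⟩, ⟨rfl, rfl⟩, -⟩ := heq
    exact absurd hpq hxy
  · simp only [List.cons_append, List.nil_append, List.cons.injEq, Prod.mk.injEq] at heq
    obtain ⟨rfl, rfl, ⟨rfl, rfl⟩, ⟨rfl, rfl⟩, rfl⟩ := heq
    exact ⟨i, j, l, k, hij, rfl⟩
  · have hlen := congrArg List.length heq
    simp only [List.length_cons, List.length_nil, List.cons_append, List.length_append] at hlen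
    omega

theorem coveredBy_of_pairs (hxy : (x, y) ∉ I) {i j k l : ℕ} (hij : i ≠ j)
    {σ : List (α × ℕ)} (h : CoveredBy I [(x, i), (x, j), (y, k), (y, l)] σ) :
    ∃ i' j' k' l', i' ≠ j' ∧ σ = [(x, i'), (x, j'), (y, k'), (y, l')] := by
  induction h with
  | refl => exact ⟨i, j, k, l, hij, rfl⟩
  | tail _ hs ih =>
    obtain ⟨i', j', k', l', hij', rfl⟩ := ih
    exact swapStep_of_pairs hxy hij' hs

end Covering

section Example

variable {α : Type} {a b₁ b₂ c β : α}

theorem exG_pair_mem_traces : [b₁, b₂] ∈ (exG a b₁ b₂ c).traces :=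
  .cons (Or.inr (Or.inl ⟨rfl, rfl, rfl⟩)) (.cons (Or.inr (Or.inr (Or.inl ⟨rfl, rfl, rfl⟩))) (.nil _))

theorem exG_a_mem_alphabet : a ∈ (exG a b₁ b₂ c).alphabet :=
  ⟨(0 : Fin 3), (2 : Fin 3), .inl ⟨rfl, rfl, rfl⟩⟩

theorem exG_c_mem_alphabet : c ∈ (exG a b₁ b₂ c).alphabet :=
  ⟨(0 : Fin 3), (2 : Fin 3), .inr (.inr (.inr ⟨rfl, rfl, rfl⟩))⟩

theorem exG'_mem_alphabet {x : α} (hx : x ∈ (exG' a c β).alphabet) : x = a ∨ x = β ∨ x = c := by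
  obtain ⟨_, _, ⟨-, rfl, -⟩ | ⟨-, rfl, -⟩ | ⟨-, rfl, -⟩⟩ := hx <;> simp

theorem exGβ_traces : (exGβ b₁ b₂).traces = {[b₁, b₂]} := by
  ext w
  rcases w with _ | ⟨x, _ | ⟨y, _ | ⟨z, w⟩⟩⟩ <;>
    simp [CFG.traces, PathRel.nil_iff, PathRel.cons_iff, exGβ]

theorem mem_exMorphIdx_iff {x : α} {t : ℕ} {u : List (α × ℕ)} :
    u ∈ exMorphIdx β b₁ b₂ (x, t) ↔
      (x = β ∧ u = [(b₁, t), (b₂, t)]) ∨ (x ≠ β ∧ u = [(x, t)]) := by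
  simp only [exMorphIdx, exMorph, exGβ_traces, Set.mem_ofPred_eq, Set.mem_singleton_iff]
  constructor
  · rintro ⟨u₀, ⟨hx, rfl⟩ | ⟨hx, rfl⟩, rfl⟩
    · exact .inl ⟨hx, rfl⟩
    · exact .inr ⟨hx, rfl⟩
  · rintro (⟨hx, rfl⟩ | ⟨hx, rfl⟩)
    · exact ⟨_, .inl ⟨hx, rfl⟩, rfl⟩
    · exact ⟨_, .inr ⟨hx, rfl⟩, rfl⟩

theorem eq_of_mem_morphWord_exMorphIdx {x : α × ℕ} {w σ : List (α × ℕ)} {i j : ℕ}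
    (hx : x.1 ≠ β → x.1 ≠ b₁)
    (h : (b₁, i) :: (b₁, j) :: σ ∈ morphWord (exMorphIdx β b₁ b₂) (x :: w)) : i = j := by
  obtain ⟨u, hu, v, -, heq⟩ := h
  rcases mem_exMorphIdx_iff.mp hu with ⟨-, rfl⟩ | ⟨hxβ, rfl⟩
  · simp only [List.cons_append, List.nil_append, List.cons.injEq, Prod.mk.injEq] at heq
    rw [heq.1.2, heq.2.1.2]
  · simp only [List.cons_append, List.nil_append, List.cons.injEq, Prod.mk.injEq] at heq
    exact absurd heq.1.1.symm (hx hxβ)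

theorem not_coveredBy_exMorphIdx (hab₁ : a ≠ b₁) (hb₁c : b₁ ≠ c) {I : Set (α × α)}
    (hb : (b₁, b₂) ∉ I) {τ' : List (α × ℕ)}
    (hτ' : τ' ∈ morphLang (exMorphIdx β b₁ b₂) (progLang (exG' a c β))) :
    ¬ CoveredBy I [(b₁, 1), (b₁, 2), (b₂, 1), (b₂, 2)] τ' := by
  intro hcov
  obtain ⟨i, j, k, l, hij, rfl⟩ := coveredBy_of_pairs hb (by decide) hcov
  obtain ⟨w, hw, hτw⟩ := Set.mem_iUnion₂.mp hτ'
  rcases w with _ | ⟨x, w⟩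
  · simp [morphWord] at hτw
  · refine hij (eq_of_mem_morphWord_exMorphIdx (fun hxβ => ?_) hτw)
    rcases exG'_mem_alphabet (mem_alphabet_of_mem_progLang hw List.mem_cons_self)
      with hxa | hxβ' | hxc
    · exact hxa ▸ hab₁
    · exact absurd hxβ' hxβ
    · exact hxc ▸ hb₁c.symm

end Example

theorem stmt_13_general {α : Type} (a b₁ b₂ c β : α)
    (h1 : a ≠ b₁) (h6 : b₁ ≠ c)
    (I I' : Set (α × α))
    (hI : I = (({a, b₁, b₂, c} : Set α) ×ˢ ({a, b₁, b₂, c} : Set α)) \ {(a, b₂), (b₁, c)})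
    (hI' : I' = I \ {(b₁, b₂)}) :
    (∀ x ∈ ({a, b₁, b₂, c} : Set α),
        (LeftMover (exG a b₁ b₂ c) I x ↔ LeftMover (exG a b₁ b₂ c) I' x) ∧
        (RightMover (exG a b₁ b₂ c) I x ↔ RightMover (exG a b₁ b₂ c) I' x)) ∧
      ([(b₁, 1), (b₁, 2), (b₂, 1), (b₂, 2)] : List (α × ℕ)) ∈ progLang (exG a b₁ b₂ c) ∧
      (∀ τ' ∈ morphLang (exMorphIdx β b₁ b₂) (progLang (exG' a c β)),
        ¬ CoveredBy I' ([(b₁, 1), (b₁, 2), (b₂, 1), (b₂, 2)] : List (α × ℕ)) τ') ∧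
      ¬ MazReduction I' (morphLang (exMorphIdx β b₁ b₂) (progLang (exG' a c β)))
          (progLang (exG a b₁ b₂ c)) := by
  subst hI'
  have hmovers : ∀ x, (LeftMover (exG a b₁ b₂ c) I x ↔
        LeftMover (exG a b₁ b₂ c) (I \ {(b₁, b₂)}) x) ∧
      (RightMover (exG a b₁ b₂ c) I x ↔ RightMover (exG a b₁ b₂ c) (I \ {(b₁, b₂)}) x) :=
    fun x => ⟨(leftMover_diff_singleton_iff exG_a_mem_alphabet (by simp [hI])).symm,
      (rightMover_diff_singleton_iff exG_c_mem_alphabet (by simp [hI])).symm⟩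
  have hτ : [(b₁, 1), (b₁, 2), (b₂, 1), (b₂, 2)] ∈ progLang (exG a b₁ b₂ c) :=
    pair_interleaving_mem_progLang exG_pair_mem_traces (by decide)
  have hnot : ∀ τ' ∈ morphLang (exMorphIdx β b₁ b₂) (progLang (exG' a c β)),
      ¬ CoveredBy (I \ {(b₁, b₂)}) [(b₁, 1), (b₁, 2), (b₂, 1), (b₂, 2)] τ' :=
    fun τ' hτ' => not_coveredBy_exMorphIdx h1 h6 (by simp) hτ'
  refine ⟨fun x _ => hmovers x, hτ, hnot, fun hred => ?_⟩
  obtain ⟨τ', hτ', hcov⟩ := hred.2 _ hτ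
  exact hnot τ' hτ' hcov

/-- Mover properties do not characterize sound atomic fusions.
With `I = {a,b₁,b₂,c}² ∖ {(a,b₂),(b₁,c)}` and `I' = I ∖ {(b₁,b₂)}`:
(i) every action in `{a,b₁,b₂,c}` has the same left/right mover status wrt. `I` and `I'`;
(ii) `F = (G', (β, G_β))` is unsound wrt. `I'` — in particular the interleaving
`⟨b₁:1⟩⟨b₁:2⟩⟨b₂:1⟩⟨b₂:2⟩ ∈ L(G)` is covered (up to `I'`) by no `τ' ∈ μ̂_F(L(G'))`. -/
theorem stmt_13 {α : Type} (a b₁ b₂ c β : α)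
    (h1 : a ≠ b₁) (h2 : a ≠ b₂) (h3 : a ≠ c) (h4 : a ≠ β) (h5 : b₁ ≠ b₂)
    (h6 : b₁ ≠ c) (h7 : b₁ ≠ β) (h8 : b₂ ≠ c) (h9 : b₂ ≠ β) (h10 : c ≠ β)
    (I I' : Set (α × α))
    (hI : I = (({a, b₁, b₂, c} : Set α) ×ˢ ({a, b₁, b₂, c} : Set α)) \ {(a, b₂), (b₁, c)})
    (hI' : I' = I \ {(b₁, b₂)}) :
    (∀ x ∈ ({a, b₁, b₂, c} : Set α),
        (LeftMover (exG a b₁ b₂ c) I x ↔ LeftMover (exG a b₁ b₂ c) I' x) ∧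
        (RightMover (exG a b₁ b₂ c) I x ↔ RightMover (exG a b₁ b₂ c) I' x)) ∧
      ([(b₁, 1), (b₁, 2), (b₂, 1), (b₂, 2)] : List (α × ℕ)) ∈ progLang (exG a b₁ b₂ c) ∧
      (∀ τ' ∈ morphLang (exMorphIdx β b₁ b₂) (progLang (exG' a c β)),
        ¬ CoveredBy I' ([(b₁, 1), (b₁, 2), (b₂, 1), (b₂, 2)] : List (α × ℕ)) τ') ∧
      ¬ MazReduction I' (morphLang (exMorphIdx β b₁ b₂) (progLang (exG' a c β)))
          (progLang (exG a b₁ b₂ c)) :=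
  stmt_13_general a b₁ b₂ c β h1 h6 I I' hI hI'
end
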